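/- arXiv:2509.10592 — 3 statements merged into one kernel-verified Lean document; each statement's English description precedes it below -/
import Mathlib

section
/- For positive integers m and n, E_m(n) = m(m−1)/2 if and only if n ≡ −1 (mod lcm(1,2,…,m)). -/
lemma mod_pred_iff (k n : ℕ) (hk : 1 ≤ k) : n % k = k - 1 ↔ k ∣ (n + 1) := by
  rw [Nat.dvd_iff_mod_eq_zero]
  have h1 := Nat.mod_lt n (show 0 < k by omega)
  have h2 : (n + 1) % k = (n % k + 1 % k) % k := Nat.add_mod n 1 k
  rcases Nat.eq_or_lt_of_le hk with h | h
  · subst h; simp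
  · have h1' : 1 % k = 1 := Nat.mod_eq_of_lt h
    constructor
    · intro hh
      rw [h2, h1', hh, Nat.sub_add_cancel hk, Nat.mod_self]
    · intro hh
      rw [h2, h1'] at hh
      rcases Nat.lt_or_ge (n % k + 1) k with hlt | hge
      · rw [Nat.mod_eq_of_lt hlt] at hh; omega
      · omega

lemma sum_pred (m : ℕ) : ∑ k ∈ Finset.Icc 1 m, (k - 1) = m * (m - 1) / 2 := by
  rw [← Finset.Ico_add_one_right_eq_Icc, Finset.sum_Ico_eq_sum_range]
  have : ∀ i, 1 + i - 1 = i := fun i => by omega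
  simp only [this]
  exact Finset.sum_range_id m

theorem stmt_4 (m n : ℕ) (hm : 1 ≤ m) (hn : 1 ≤ n) :
    (∑ k ∈ Finset.Icc 1 m, (n % k)) = m * (m - 1) / 2 ↔
      (n : ℤ) ≡ -1 [ZMOD ((Finset.Icc 1 m).lcm id : ℕ)] := by
  have step1 : (∑ k ∈ Finset.Icc 1 m, (n % k)) = m * (m - 1) / 2 ↔
      ∀ k ∈ Finset.Icc 1 m, n % k = k - 1 := by
    rw [← sum_pred m]
    exact Finset.sum_eq_sum_iff_of_le (fun i hi => by
      have h1 : 1 ≤ i := (Finset.mem_Icc.mp hi).1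
      have h2 := Nat.mod_lt n (show 0 < i by omega)
      omega)
  have step2 : (∀ k ∈ Finset.Icc 1 m, n % k = k - 1) ↔
      ((Finset.Icc 1 m).lcm id ∣ (n + 1)) := by
    rw [Finset.lcm_dvd_iff]
    exact (forall₂_congr (fun k hk => mod_pred_iff k n (Finset.mem_Icc.mp hk).1)).symm.symm
  rw [step1, step2, Int.modEq_iff_dvd]
  rw [show (-1 : ℤ) - (n : ℤ) = -((n : ℤ) + 1) by ring, dvd_neg,
    show ((n : ℤ) + 1) = (((n + 1 : ℕ)) : ℤ) by push_cast; ring,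
    Int.natCast_dvd_natCast]
end

section
/- For every integer n ≥ 2, n is prime if and only if E_n(n) − E_{n−1}(n−1) = n − 2. -/
lemma key_mod_dvd {n k : ℕ} (hn : 1 ≤ n) (hk : 1 ≤ k) (hd : k ∣ n) :
    (n - 1) % k = k - 1 := by
  obtain ⟨m, rfl⟩ := hd
  have hm : 1 ≤ m := by
    rcases Nat.eq_zero_or_pos m with h | h
    · simp [h] at hn
    · exact h
  have hstep : k * m - 1 = (k - 1) + k * (m - 1) := by
    cases k with
    | zero => omega
    | succ k' =>
      cases m with
      | zero => omega
      | succ m' =>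
        have hexp : (k' + 1) * (m' + 1) = (k' + 1) * m' + k' + 1 := by ring
        simp only [Nat.succ_sub_one]
        omega
  rw [hstep, Nat.add_mul_mod_self_left, Nat.mod_eq_of_lt (by omega)]

lemma key_mod_ndvd {n k : ℕ} (hn : 1 ≤ n) (hk : 1 ≤ k) (hd : ¬ k ∣ n) :
    n % k = (n - 1) % k + 1 := by
  have hk2 : 2 ≤ k := by
    rcases Nat.lt_or_ge k 2 with h | h
    · have hk1 : k = 1 := by omega
      subst hk1
      exact absurd (one_dvd n) hd
    · exact h
  have h1 : n = (n - 1) + 1 := by omega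
  have h2 : n % k = ((n - 1) % k + 1) % k := by
    conv_lhs => rw [h1]
    rw [Nat.add_mod, Nat.mod_eq_of_lt (show 1 < k by omega)]
  have hlt : (n - 1) % k < k := Nat.mod_lt _ (by omega)
  rcases Nat.lt_or_ge ((n - 1) % k + 1) k with h | h
  · rw [h2, Nat.mod_eq_of_lt h]
  · exfalso
    have heq : (n - 1) % k + 1 = k := by omega
    have : n % k = 0 := by rw [h2, heq, Nat.mod_self]
    exact hd (Nat.dvd_of_mod_eq_zero this)

theorem stmt_9 (n : ℕ) (hn : 2 ≤ n) :
    n.Prime ↔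
      ((∑ k ∈ Finset.Icc 1 n, (n % k) : ℕ) : ℤ) -
        ((∑ k ∈ Finset.Icc 1 (n - 1), ((n - 1) % k) : ℕ) : ℤ) = (n : ℤ) - 2 := by
  have hn1 : n - 1 + 1 = n := by omega
  have hsum : ((∑ k ∈ Finset.Icc 1 n, (n % k) : ℕ) : ℤ) -
      ((∑ k ∈ Finset.Icc 1 (n - 1), ((n - 1) % k) : ℕ) : ℤ) =
      ((n : ℤ) - 1) - (∑ d ∈ n.properDivisors, (d : ℤ)) := by
    have h1 : (∑ k ∈ Finset.Icc 1 n, (n % k) : ℕ) =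
        ∑ k ∈ Finset.Icc 1 (n - 1), (n % k) := by
      rw [← hn1, Finset.sum_Icc_succ_top (by omega), hn1]
      simp [Nat.mod_self]
    rw [h1, Nat.cast_sum, Nat.cast_sum, ← Finset.sum_sub_distrib]
    have h2 : ∀ k ∈ Finset.Icc 1 (n - 1),
        ((n % k : ℕ) : ℤ) - (((n - 1) % k : ℕ) : ℤ)
          = 1 - (if k ∣ n then (k : ℤ) else 0) := by
      intro k hk
      simp only [Finset.mem_Icc] at hk
      by_cases hd : k ∣ n
      · have e1 : n % k = 0 := Nat.mod_eq_zero_of_dvd hd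
        have e2 : (n - 1) % k = k - 1 := key_mod_dvd (by omega) hk.1 hd
        simp only [hd, if_true]
        have := hk.1
        omega
      · simp only [hd, if_false]
        rw [key_mod_ndvd (by omega) hk.1 hd]
        push_cast
        ring
    rw [Finset.sum_congr rfl h2, Finset.sum_sub_distrib, Finset.sum_const,
      Nat.card_Icc, ← Finset.sum_filter]
    have h3 : (Finset.Icc 1 (n - 1)).filter (· ∣ n) = n.properDivisors := by
      ext d
      simp only [Finset.mem_filter, Finset.mem_Icc, Nat.mem_properDivisors]
      constructor
      · rintro ⟨⟨ha, hb⟩, hc⟩; exact ⟨hc, by omega⟩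
      · rintro ⟨ha, hb⟩
        have : 1 ≤ d := Nat.pos_of_dvd_of_pos ha (by omega)
        exact ⟨⟨this, by omega⟩, ha⟩
    rw [h3]
    have hcard : ((n - 1 + 1 - 1 : ℕ) : ℤ) = (n : ℤ) - 1 := by omega
    rw [nsmul_eq_mul, hcard]
    ring
  rw [hsum, ← Nat.sum_properDivisors_eq_one_iff_prime]
  have hc : (∑ d ∈ n.properDivisors, (d : ℤ)) = ((∑ d ∈ n.properDivisors, d : ℕ) : ℤ) := by
    push_cast; ring
  rw [hc]
  constructor
  · intro h; rw [h]; push_cast; ring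
  · intro h
    have : ((∑ d ∈ n.properDivisors, d : ℕ) : ℤ) = 1 := by linarith
    exact_mod_cast this
end

section
/- Let m ≥ 1 and write n = q·m + r with q ≥ 0 and 0 ≤ r ≤ m−1. For each 1 ≤ k ≤ m set b_k := m mod k. Then E_m(q·m + r) = q·E_m(m) + m·r − ∑_{k=1}^{m} k·⌊(q·b_k + r)/k⌋. -/
theorem stmt_14 (m q r : ℕ) (hm : 1 ≤ m) (hr : r ≤ m - 1) :
    ((∑ k ∈ Finset.Icc 1 m, ((q * m + r) % k) : ℕ) : ℤ) =
      (q : ℤ) * ((∑ k ∈ Finset.Icc 1 m, (m % k) : ℕ) : ℤ) + (m : ℤ) * r -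
        ∑ k ∈ Finset.Icc 1 m, (k : ℤ) * ((q * (m % k) + r) / k : ℕ) := by
  have key : ∀ k ∈ Finset.Icc 1 m,
      (((q * m + r) % k : ℕ) : ℤ) =
        (q : ℤ) * ((m % k : ℕ) : ℤ) + (r : ℤ)
          - (k : ℤ) * ((q * (m % k) + r) / k : ℕ) := by
    intro k hk
    have h1 : (q * m + r) % k = (q * (m % k) + r) % k := by
      simp [Nat.add_mod, Nat.mul_mod]
    have h2 : (q * (m % k) + r) % k + k * ((q * (m % k) + r) / k)
        = q * (m % k) + r := Nat.mod_add_div _ _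
    have h3 : (q : ℤ) * ((m % k : ℕ) : ℤ) = ((q * (m % k) : ℕ) : ℤ) := by
      push_cast; ring
    have h4 : (k : ℤ) * (((q * (m % k) + r) / k : ℕ) : ℤ)
        = ((k * ((q * (m % k) + r) / k) : ℕ) : ℤ) := by push_cast; ring
    rw [h1, h3, h4]
    omega
  rw [Nat.cast_sum, Finset.sum_congr rfl key, Finset.sum_sub_distrib,
    Finset.sum_add_distrib, ← Finset.mul_sum, Finset.sum_const,
    Nat.card_Icc, ← Nat.cast_sum]
  simp [nsmul_eq_mul, mul_comm]
end
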